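/- If A and B are real symmetric positive definite n×n matrices with trace(A B⁻¹) = ln det(A B⁻¹) + n, then A = B. -/

import Mathlib

/-!
With `S = √B`, the matrix `C = S⁻¹ A S⁻¹` is positive definite and has the same trace and
determinant as `A B⁻¹`. In terms of the eigenvalues `μᵢ > 0` of `C` the hypothesis reads
`∑ (μᵢ - 1 - log μᵢ) = 0`; every term is nonnegative and vanishes only at `μᵢ = 1`, so `C = 1`
and `A = S S = B`.
-/

open scoped MatrixOrder

namespace Matrix

variable {ι 𝕜 : Type*} [Fintype ι] [DecidableEq ι] [RCLike 𝕜]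

theorem IsHermitian.eq_one_of_eigenvalues_eq_one {C : Matrix ι ι 𝕜} (hC : C.IsHermitian)
    (h : ∀ i, hC.eigenvalues i = 1) : C = 1 :=
  CFC.eq_one_of_spectrum_subset_one (R := ℝ) C (by
    rw [hC.spectrum_real_eq_range_eigenvalues]
    rintro _ ⟨i, rfl⟩
    exact h i) hC

theorem PosDef.eq_one_of_trace_eq_log_det_add {C : Matrix ι ι ℝ} (hC : C.PosDef)
    (h : C.trace = Real.log C.det + Fintype.card ι) : C = 1 := by
  set μ := hC.isHermitian.eigenvalues
  have hμ : ∀ i, 0 < μ i := hC.eigenvalues_pos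
  have hsum : ∑ i, (μ i - 1 - Real.log (μ i)) = 0 := by
    rw [hC.isHermitian.trace_eq_sum_eigenvalues, hC.isHermitian.det_eq_prod_eigenvalues] at h
    simp only [RCLike.ofReal_real_eq_id, id] at h
    rw [Real.log_prod fun i _ => (hμ i).ne'] at h
    simp only [Finset.sum_sub_distrib, Finset.sum_const, Finset.card_univ, nsmul_eq_mul, mul_one]
    linarith
  refine hC.isHermitian.eq_one_of_eigenvalues_eq_one fun i => ?_
  have hterm : μ i - 1 - Real.log (μ i) = 0 :=
    (Finset.sum_eq_zero_iff_of_nonneg fun j _ =>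
      sub_nonneg.2 (Real.log_le_sub_one_of_pos (hμ j))).1 hsum i (Finset.mem_univ i)
  by_contra hne
  linarith [Real.log_lt_sub_one_of_pos (hμ i) hne]

theorem PosDef.eq_of_trace_mul_inv_eq_log_det_add {A B : Matrix ι ι ℝ} (hA : A.PosDef)
    (hB : B.PosDef) (h : (A * B⁻¹).trace = Real.log (A * B⁻¹).det + Fintype.card ι) : A = B := by
  set S := CFC.sqrt B
  have hS : S.PosDef := IsStrictlyPositive.posDef (hB.isStrictlyPositive.sqrt B)
  have hSS : S * S = B := CFC.sqrt_mul_sqrt_self B hB.posSemidef.nonneg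
  have hC : (S⁻¹ * A * S⁻¹).PosDef := by
    simpa [hS.inv.isHermitian.star_eq] using
      (IsUnit.posDef_star_left_conjugate_iff hS.inv.isUnit).2 hA
  have htrace : (S⁻¹ * A * S⁻¹).trace = (A * B⁻¹).trace := by
    rw [← hSS, mul_inv_rev, trace_mul_cycle, trace_mul_comm]
  have hdet : (S⁻¹ * A * S⁻¹).det = (A * B⁻¹).det := by
    rw [← hSS, mul_inv_rev]
    simp only [det_mul]
    ring
  have hC1 : S⁻¹ * A * S⁻¹ = 1 := hC.eq_one_of_trace_eq_log_det_add (by rw [htrace, hdet, h])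
  have hSdet : IsUnit S.det := (isUnit_iff_isUnit_det S).1 hS.isUnit
  calc A = S * (S⁻¹ * A * S⁻¹) * S := by
        simp only [Matrix.mul_assoc, nonsing_inv_mul S hSdet, Matrix.mul_one,
          mul_nonsing_inv_cancel_left S _ hSdet]
    _ = B := by rw [hC1, Matrix.mul_one, hSS]

end Matrix

theorem eq_of_trace_eq_log_det_add (n : ℕ) (A B : Matrix (Fin n) (Fin n) ℝ)
    (hA : A.PosDef) (hB : B.PosDef)
    (h : (A * B⁻¹).trace = Real.log (A * B⁻¹).det + n) : A = B :=
  hA.eq_of_trace_mul_inv_eq_log_det_add hB (by simpa using h)
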